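/- Let q ∈ ℂ* with |q| ≠ 1 and let a ∈ ℂ(z)*. If there exist a nonzero integer n, an element h ∈ ℂ(z)* and μ ∈ ℂ* such that a^n = μ·σ_q(h)/h, then there exist g ∈ ℂ(z)* and λ ∈ ℂ* such that a = λ·σ_q(g)/g and λ^n ∈ μ·q^ℤ (i.e. λ^n = μ·q^s for some integer s). -/

import Mathlib

/-!
Setting: fix `q ∈ ℂ*` with `|q| ≠ 1`.  We work with meromorphic functions on the
punctured plane `ℂ* = {z ≠ 0}`, represented as plain functions `ℂ → ℂ` together
with a `MeromorphicOn` hypothesis; all identities between meromorphic functions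
are understood to hold off a countable (discrete) exceptional set (`MZeroOn`).

* `CE q` is the field `C_E` of `σ_q`-invariant meromorphic functions on `ℂ*`;
* `KE q` is the field `K_E = C_E(z)`;
* `AlgIndepOver U K g` says that the family `g` of meromorphic functions on `U`
  is algebraically independent over the coefficient field `K`: every polynomial
  with coefficients in `K` that vanishes (as meromorphic function on `U`) at the
  family has all its coefficients zero as meromorphic functions;
* `delq` is the derivation `∂ = z·d/dz` on functions, `dRat` the corresponding
  derivation on rational functions;
* `sigmaq q` is the substitution `z ↦ qz` on rational functions `RatFunc ℂ`;
* `QDE q a f` is the q-difference equation `f(qz) = a(z)·f(z)` as an identity of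
  meromorphic functions on `ℂ*` (written without denominators);
* `ordAt a c` is the order of vanishing of the rational function `a` at `c`, and
  `divE q hq a` is the elliptic divisor of `a`, an element of the free abelian
  group on `ℂ*/q^ℤ` (realised as a finitely supported `ℤ`-valued function on the
  quotient group `ℂˣ ⧸ zpowers q`).
-/

open scoped Classical

noncomputable section

/-- The punctured complex plane ℂ*. -/
def Cstar : Set ℂ := {z : ℂ | z ≠ 0}

/-- `f` represents the zero meromorphic function on `U`:
it vanishes off a countable exceptional set. -/
def MZeroOn (U : Set ℂ) (f : ℂ → ℂ) : Prop :=
  ∃ S : Set ℂ, S.Countable ∧ ∀ z ∈ U \ S, f z = 0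

/-- `f` is a nonzero meromorphic function on `U`. -/
def MerNonzero (U : Set ℂ) (f : ℂ → ℂ) : Prop :=
  MeromorphicOn f U ∧ ¬ MZeroOn U f

/-- The derivation ∂ = z·d/dz. -/
def delq (f : ℂ → ℂ) : ℂ → ℂ := fun z => z * deriv f z

/-- The field C_E of σ_q-invariant meromorphic functions on ℂ*. -/
def CE (q : ℂ) : Set (ℂ → ℂ) :=
  {c | MeromorphicOn c Cstar ∧ ∀ z : ℂ, c (q * z) = c z}

/-- Evaluation of a polynomial with function coefficients at the coordinate z. -/
def evalz (P : Polynomial (ℂ → ℂ)) : ℂ → ℂ :=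
  Polynomial.eval (fun z : ℂ => z) P

/-- The field K_E = C_E(z): quotients of polynomials in z with coefficients in C_E. -/
def KE (q : ℂ) : Set (ℂ → ℂ) :=
  {f | ∃ Np Dp : Polynomial (ℂ → ℂ),
        (∀ i, Np.coeff i ∈ CE q) ∧ (∀ i, Dp.coeff i ∈ CE q) ∧
        ¬ MZeroOn Cstar (evalz Dp) ∧
        MZeroOn Cstar (fun z => f z * evalz Dp z - evalz Np z)}

/-- The family `g` of meromorphic functions on `U` is algebraically independent
over the set `K` of coefficient functions. -/
def AlgIndepOver (U : Set ℂ) (K : Set (ℂ → ℂ)) {ι : Type} (g : ι → ℂ → ℂ) : Prop :=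
  ∀ P : MvPolynomial ι (ℂ → ℂ),
    (∀ m, MvPolynomial.coeff m P ∈ K) →
    MZeroOn U (MvPolynomial.eval g P) →
    ∀ m, MZeroOn U (MvPolynomial.coeff m P)

/-- σ_q acting on rational functions: (σ_q a)(z) = a(qz). -/
def sigmaq (q : ℂ) (a : RatFunc ℂ) : RatFunc ℂ :=
  algebraMap (Polynomial ℂ) (RatFunc ℂ) (a.num.comp (Polynomial.C q * Polynomial.X)) /
    algebraMap (Polynomial ℂ) (RatFunc ℂ) (a.denom.comp (Polynomial.C q * Polynomial.X))

/-- The q-difference equation f(qz) = a(z)·f(z), as an identity of meromorphic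
functions on ℂ* (denominators cleared). -/
def QDE (q : ℂ) (a : RatFunc ℂ) (f : ℂ → ℂ) : Prop :=
  MZeroOn Cstar (fun z => f (q * z) * Polynomial.eval z a.denom - Polynomial.eval z a.num * f z)

/-- Order of vanishing of a rational function at a point. -/
def ordAt (a : RatFunc ℂ) (c : ℂ) : ℤ :=
  (Polynomial.rootMultiplicity c a.num : ℤ) - (Polynomial.rootMultiplicity c a.denom : ℤ)

/-- The elliptic divisor of a rational function: the image in Div(ℂ*/q^ℤ) of the
part of its divisor prime to 0, as a (finitely supported) ℤ-valued function on
the quotient group ℂˣ/q^ℤ. -/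
def divE (q : ℂ) (hq : q ≠ 0) (a : RatFunc ℂ) :
    (ℂˣ ⧸ Subgroup.zpowers (Units.mk0 q hq)) → ℤ := fun c =>
  ∑ᶠ α : ℂˣ,
    if (QuotientGroup.mk α : ℂˣ ⧸ Subgroup.zpowers (Units.mk0 q hq)) = c then
      ordAt a (α : ℂ) else 0

/-- An element of ℂ(z)* is standard if no two points of its divisor away from 0
are congruent modulo q^ℤ: if c ∈ ℂ* is a zero or pole of a and m ≠ 0, then q^m·c
is not a zero or pole of a. -/
def StandardQ (q : ℂ) (a : RatFunc ℂ) : Prop :=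
  ∀ c : ℂ, c ≠ 0 → ordAt a c ≠ 0 → ∀ m : ℤ, m ≠ 0 → ordAt a (q ^ m * c) = 0

/-- The derivation ∂ = z·d/dz on rational functions. -/
def dRat (a : RatFunc ℂ) : RatFunc ℂ :=
  RatFunc.X *
    ((algebraMap (Polynomial ℂ) (RatFunc ℂ) (Polynomial.derivative a.num) *
        algebraMap (Polynomial ℂ) (RatFunc ℂ) a.denom -
      algebraMap (Polynomial ℂ) (RatFunc ℂ) a.num *
        algebraMap (Polynomial ℂ) (RatFunc ℂ) (Polynomial.derivative a.denom)) /
      algebraMap (Polynomial ℂ) (RatFunc ℂ) a.denom ^ 2)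

/-!
Taking orders at points of `ℂ`, the hypothesis becomes `n · ord_c a = ord_{qc} h - ord_c h`.
As `|q| ≠ 1`, every `q`-orbit in `ℂ*` is infinite and therefore meets a point where `h` has
order `0`; propagating along the orbit gives `n ∣ ord_c h` for `c ≠ 0`. The rational function `g`
with `ord_c g = ord_c h / n` then leaves `a · g / σ_q g` without zeros or poles, i.e. constant `λ`.
Finally `u = h / g^n` satisfies `σ_q u = (λ^n / μ) · u`, so its divisor is `q`-invariant, hence
concentrated at `0`: `u = γ z^s`, and comparing `σ_q u = γ q^s z^s` gives `λ^n / μ = q^s`.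
-/

open Polynomial

variable {q : ℂ}

lemma ordAt_div_algebraMap {p r : ℂ[X]} (hp : p ≠ 0) (hr : r ≠ 0) (c : ℂ) :
    ordAt (algebraMap ℂ[X] (RatFunc ℂ) p / algebraMap ℂ[X] (RatFunc ℂ) r) c =
      (rootMultiplicity c p : ℤ) - rootMultiplicity c r := by
  set a := algebraMap ℂ[X] (RatFunc ℂ) p / algebraMap ℂ[X] (RatFunc ℂ) r
  have hnum : a.num ≠ 0 := RatFunc.num_ne_zero (div_ne_zero
    (RatFunc.algebraMap_ne_zero hp) (RatFunc.algebraMap_ne_zero hr))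
  have hcross : a.num * r = p * a.denom := by
    apply RatFunc.algebraMap_injective ℂ
    rw [map_mul, map_mul, ← div_eq_div_iff (RatFunc.algebraMap_ne_zero a.denom_ne_zero)
      (RatFunc.algebraMap_ne_zero hr), RatFunc.num_div_denom]
  have := congrArg (rootMultiplicity c) hcross
  rw [rootMultiplicity_mul (mul_ne_zero hnum hr),
    rootMultiplicity_mul (mul_ne_zero hp a.denom_ne_zero)] at this
  unfold ordAt
  omega

lemma ordAt_algebraMap {p : ℂ[X]} (hp : p ≠ 0) (c : ℂ) :
    ordAt (algebraMap ℂ[X] (RatFunc ℂ) p) c = rootMultiplicity c p := by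
  have := ordAt_div_algebraMap hp one_ne_zero c
  rwa [map_one, div_one, ← C_1, rootMultiplicity_C, Nat.cast_zero, sub_zero] at this

lemma ordAt_mul {a b : RatFunc ℂ} (ha : a ≠ 0) (hb : b ≠ 0) (c : ℂ) :
    ordAt (a * b) c = ordAt a c + ordAt b c := by
  have hnum := mul_ne_zero (RatFunc.num_ne_zero ha) (RatFunc.num_ne_zero hb)
  have hden := mul_ne_zero a.denom_ne_zero b.denom_ne_zero
  have hab : a * b = algebraMap ℂ[X] (RatFunc ℂ) (a.num * b.num) /
      algebraMap ℂ[X] (RatFunc ℂ) (a.denom * b.denom) := by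
    rw [map_mul, map_mul, ← div_mul_div_comm, RatFunc.num_div_denom, RatFunc.num_div_denom]
  rw [hab, ordAt_div_algebraMap hnum hden, rootMultiplicity_mul hnum, rootMultiplicity_mul hden]
  unfold ordAt
  push_cast
  ring

lemma ordAt_C {μ : ℂ} (hμ : μ ≠ 0) (c : ℂ) : ordAt (RatFunc.C μ) c = 0 := by
  rw [← RatFunc.algebraMap_C, ordAt_algebraMap (C_ne_zero.2 hμ), rootMultiplicity_C]
  rfl

lemma ordAt_one (c : ℂ) : ordAt 1 c = 0 := by
  simpa using ordAt_C one_ne_zero c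

lemma ordAt_inv {a : RatFunc ℂ} (ha : a ≠ 0) (c : ℂ) : ordAt a⁻¹ c = -ordAt a c := by
  have := ordAt_mul (inv_ne_zero ha) ha c
  rw [inv_mul_cancel₀ ha, ordAt_one] at this
  omega

lemma ordAt_div {a b : RatFunc ℂ} (ha : a ≠ 0) (hb : b ≠ 0) (c : ℂ) :
    ordAt (a / b) c = ordAt a c - ordAt b c := by
  rw [div_eq_mul_inv, ordAt_mul ha (inv_ne_zero hb), ordAt_inv hb, sub_eq_add_neg]

lemma ordAt_pow {a : RatFunc ℂ} (ha : a ≠ 0) (k : ℕ) (c : ℂ) :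
    ordAt (a ^ k) c = k * ordAt a c := by
  induction k with
  | zero => simpa using ordAt_one c
  | succ k ih =>
    rw [pow_succ, ordAt_mul (pow_ne_zero k ha) ha, ih]
    push_cast
    ring

lemma ordAt_zpow {a : RatFunc ℂ} (ha : a ≠ 0) (k : ℤ) (c : ℂ) :
    ordAt (a ^ k) c = k * ordAt a c := by
  cases k with
  | ofNat k => simpa using ordAt_pow ha k c
  | negSucc k =>
    rw [zpow_negSucc, ordAt_inv (pow_ne_zero _ ha), ordAt_pow ha, Int.negSucc_eq]
    push_cast
    ring

lemma ordAt_prod {F : Finset ℂ} {f : ℂ → RatFunc ℂ} (hf : ∀ d ∈ F, f d ≠ 0) (c : ℂ) :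
    ordAt (∏ d ∈ F, f d) c = ∑ d ∈ F, ordAt (f d) c := by
  induction F using Finset.induction with
  | empty => simpa using ordAt_one c
  | insert x F hx ih =>
    rw [Finset.forall_mem_insert] at hf
    rw [Finset.prod_insert hx, Finset.sum_insert hx,
      ordAt_mul hf.1 (Finset.prod_ne_zero_iff.2 hf.2), ih hf.2]

lemma ordAt_X_sub_C (d c : ℂ) :
    ordAt (RatFunc.X - RatFunc.C d) c = if c = d then 1 else 0 := by
  rw [← RatFunc.algebraMap_X, ← RatFunc.algebraMap_C, ← map_sub,
    ordAt_algebraMap (X_sub_C_ne_zero d), rootMultiplicity_X_sub_C]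
  split_ifs <;> rfl

lemma ordAt_X (c : ℂ) : ordAt RatFunc.X c = if c = 0 then 1 else 0 := by
  simpa using ordAt_X_sub_C 0 c

lemma RatFunc.X_sub_C_ne_zero (d : ℂ) : (RatFunc.X - RatFunc.C d : RatFunc ℂ) ≠ 0 := by
  rw [← RatFunc.algebraMap_X, ← RatFunc.algebraMap_C, ← map_sub]
  exact RatFunc.algebraMap_ne_zero (Polynomial.X_sub_C_ne_zero d)

lemma finite_setOf_ordAt_ne_zero {a : RatFunc ℂ} (ha : a ≠ 0) :
    {c : ℂ | ordAt a c ≠ 0}.Finite := by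
  refine ((finite_setOfPred_isRoot (RatFunc.num_ne_zero ha)).union
    (finite_setOfPred_isRoot a.denom_ne_zero)).subset fun c hc => ?_
  by_contra hroot
  simp only [Set.mem_union, Set.mem_ofPred_eq, not_or] at hroot
  simp [ordAt, rootMultiplicity_eq_zero hroot.1, rootMultiplicity_eq_zero hroot.2] at hc

lemma eq_C_of_ordAt_eq_zero {a : RatFunc ℂ} (ha : a ≠ 0) (h : ∀ c, ordAt a c = 0) :
    ∃ γ : ℂ, γ ≠ 0 ∧ a = RatFunc.C γ := by
  have hnum := RatFunc.num_ne_zero ha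
  have hroots : a.num.roots = a.denom.roots := Multiset.ext.2 fun c => by
    have := h c
    rw [count_roots, count_roots]
    unfold ordAt at this
    omega
  set P := (a.num.roots.map fun c => X - C c).prod
  set ln := a.num.leadingCoeff
  set ld := a.denom.leadingCoeff
  have hnumP : C ln * P = a.num :=
    C_leadingCoeff_mul_prod_multiset_X_sub_C IsAlgClosed.card_roots_eq_natDegree
  have hdenP : C ld * P = a.denom := by
    simp only [P, hroots]
    exact C_leadingCoeff_mul_prod_multiset_X_sub_C IsAlgClosed.card_roots_eq_natDegree
  have hP : algebraMap ℂ[X] (RatFunc ℂ) P ≠ 0 :=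
    RatFunc.algebraMap_ne_zero (right_ne_zero_of_mul (hdenP ▸ a.denom_ne_zero))
  refine ⟨ln / ld,
    div_ne_zero (leadingCoeff_ne_zero.2 hnum) (leadingCoeff_ne_zero.2 a.denom_ne_zero), ?_⟩
  calc a = algebraMap ℂ[X] (RatFunc ℂ) a.num / algebraMap ℂ[X] (RatFunc ℂ) a.denom :=
        (RatFunc.num_div_denom a).symm
    _ = RatFunc.C (ln / ld) := by
      rw [← hnumP, ← hdenP, map_mul, map_mul, RatFunc.algebraMap_C, RatFunc.algebraMap_C,
        mul_div_mul_right _ _ hP, map_div₀]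

lemma eq_C_mul_X_zpow_of_ordAt_eq_zero {a : RatFunc ℂ} (ha : a ≠ 0)
    (h : ∀ c, c ≠ 0 → ordAt a c = 0) :
    ∃ γ : ℂ, γ ≠ 0 ∧ a = RatFunc.C γ * RatFunc.X ^ ordAt a 0 := by
  have hXs : (RatFunc.X : RatFunc ℂ) ^ ordAt a 0 ≠ 0 := zpow_ne_zero _ RatFunc.X_ne_zero
  obtain ⟨γ, hγ, hv⟩ := eq_C_of_ordAt_eq_zero (div_ne_zero ha hXs) fun c => by
    rw [ordAt_div ha hXs, ordAt_zpow RatFunc.X_ne_zero, ordAt_X]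
    rcases eq_or_ne c 0 with rfl | hc
    · simp
    · simp [h c hc, hc]
  exact ⟨γ, hγ, (div_eq_iff hXs).1 hv⟩

lemma exists_ordAt_eq {w : ℂ → ℤ} (hw : (Function.support w).Finite) :
    ∃ g : RatFunc ℂ, g ≠ 0 ∧ ∀ c, ordAt g c = w c := by
  have hfac : ∀ d ∈ hw.toFinset, (RatFunc.X - RatFunc.C d) ^ w d ≠ 0 :=
    fun d _ => zpow_ne_zero _ (RatFunc.X_sub_C_ne_zero d)
  refine ⟨∏ d ∈ hw.toFinset, (RatFunc.X - RatFunc.C d) ^ w d, Finset.prod_ne_zero_iff.2 hfac,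
    fun c => ?_⟩
  simp_rw [ordAt_prod hfac, ordAt_zpow (RatFunc.X_sub_C_ne_zero _), ordAt_X_sub_C, mul_ite, mul_one,
    mul_zero, Finset.sum_ite_eq, Set.Finite.mem_toFinset, Function.mem_support]
  split_ifs with hc
  · rfl
  · exact (not_not.1 hc).symm

lemma injective_pow_mul_of_norm_ne_one (hq0 : q ≠ 0) (hq : ‖q‖ ≠ 1) {c : ℂ} (hc : c ≠ 0) :
    Function.Injective fun N : ℕ => q ^ N * c := by
  intro i j hij
  apply pow_right_injective₀ (norm_pos_iff.2 hq0) hq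
  simp only [← norm_pow, mul_right_cancel₀ hc hij]

lemma dvd_ordAt_of_dvd_ordAt_mul_sub (hq0 : q ≠ 0) (hq : ‖q‖ ≠ 1) {f : RatFunc ℂ} (hf : f ≠ 0)
    {n : ℤ} (hdvd : ∀ x, n ∣ ordAt f (q * x) - ordAt f x) {c : ℂ} (hc : c ≠ 0) :
    n ∣ ordAt f c := by
  obtain ⟨N, hN⟩ : ∃ N : ℕ, ordAt f (q ^ N * c) = 0 := by
    by_contra! hne
    exact Set.infinite_range_of_injective (injective_pow_mul_of_norm_ne_one hq0 hq hc)
      ((finite_setOf_ordAt_ne_zero hf).subset (Set.range_subset_iff.2 hne))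
  have horbit : ∀ N : ℕ, n ∣ ordAt f (q ^ N * c) - ordAt f c := by
    intro N
    induction N with
    | zero => simp
    | succ N ih =>
      rw [pow_succ', mul_assoc, ← sub_add_sub_cancel _ (ordAt f (q ^ N * c))]
      exact dvd_add (hdvd _) ih
  simpa [hN] using horbit N

lemma comp_C_mul_X_ne_zero (hq0 : q ≠ 0) {p : ℂ[X]} (hp : p ≠ 0) : p.comp (C q * X) ≠ 0 := by
  rw [Ne, comp_eq_zero_iff]
  rintro (h | ⟨-, h⟩)
  · exact hp h
  · simpa [hq0] using congrArg (coeff · 1) h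

-- `sigmaq` is `RatFunc.map` along `p ↦ p.comp (C q * X)`, hence a ring homomorphism.
def sigmaqAlgHom (q : ℂ) (hq0 : q ≠ 0) : RatFunc ℂ →ₐ[ℂ] RatFunc ℂ :=
  RatFunc.mapAlgHom (aeval (R := ℂ) (C q * X : ℂ[X])) fun p hp => by
    rw [Submonoid.mem_comap, ← comp_eq_aeval]
    exact mem_nonZeroDivisors_of_ne_zero (comp_C_mul_X_ne_zero hq0 (nonZeroDivisors.ne_zero hp))

lemma sigmaqAlgHom_apply (hq0 : q ≠ 0) (a : RatFunc ℂ) : sigmaqAlgHom q hq0 a = sigmaq q a := by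
  rw [sigmaqAlgHom, RatFunc.coe_mapAlgHom_eq_coe_map, RatFunc.map_apply]
  rfl

lemma sigmaq_ne_zero (hq0 : q ≠ 0) {a : RatFunc ℂ} (ha : a ≠ 0) : sigmaq q a ≠ 0 := by
  rw [← sigmaqAlgHom_apply hq0]
  exact (_root_.map_ne_zero _).2 ha

lemma ordAt_sigmaq (hq0 : q ≠ 0) {a : RatFunc ℂ} (ha : a ≠ 0) (c : ℂ) :
    ordAt (sigmaq q a) c = ordAt a (q * c) := by
  have hCX : C q * X = C q * X + C 0 := by rw [C_0, add_zero]
  rw [sigmaq, ordAt_div_algebraMap (comp_C_mul_X_ne_zero hq0 (RatFunc.num_ne_zero ha))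
    (comp_C_mul_X_ne_zero hq0 a.denom_ne_zero), hCX,
    rootMultiplicity_comp_C_mul_X_add_C _ _ _ _ hq0.isUnit,
    rootMultiplicity_comp_C_mul_X_add_C _ _ _ _ hq0.isUnit, add_zero]
  rfl

lemma sigmaqAlgHom_X (hq0 : q ≠ 0) :
    sigmaqAlgHom q hq0 RatFunc.X = RatFunc.C q * RatFunc.X := by
  rw [sigmaqAlgHom, RatFunc.coe_mapAlgHom_eq_coe_map, ← RatFunc.algebraMap_X,
    ← div_one (algebraMap ℂ[X] (RatFunc ℂ) X), ← map_one (algebraMap ℂ[X] (RatFunc ℂ)),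
    RatFunc.map_apply_div]
  simp

lemma sigmaqAlgHom_C (hq0 : q ≠ 0) (μ : ℂ) : sigmaqAlgHom q hq0 (RatFunc.C μ) = RatFunc.C μ := by
  rw [← RatFunc.algebraMap_eq_C, AlgHom.commutes]

lemma exists_eq_C_mul_sigmaq_div (hq0 : q ≠ 0) (hq : ‖q‖ ≠ 1) {a : RatFunc ℂ} (ha : a ≠ 0)
    {n : ℤ} (hn : n ≠ 0) {μ : ℂ} (hμ : μ ≠ 0) {h : RatFunc ℂ} (hh : h ≠ 0)
    (hyp : a ^ n = RatFunc.C μ * sigmaq q h / h) :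
    ∃ g : RatFunc ℂ, g ≠ 0 ∧ ∃ lam : ℂ, lam ≠ 0 ∧ a = RatFunc.C lam * sigmaq q g / g := by
  have hCμ : (RatFunc.C μ : RatFunc ℂ) ≠ 0 := (_root_.map_ne_zero _).2 hμ
  have hord : ∀ c, n * ordAt a c = ordAt h (q * c) - ordAt h c := fun c => by
    rw [← ordAt_zpow ha, hyp, ordAt_div (mul_ne_zero hCμ (sigmaq_ne_zero hq0 hh)) hh,
      ordAt_mul hCμ (sigmaq_ne_zero hq0 hh), ordAt_C hμ, ordAt_sigmaq hq0 hh, zero_add]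
  have hdvd : ∀ c, c ≠ 0 → n ∣ ordAt h c := fun c =>
    dvd_ordAt_of_dvd_ordAt_mul_sub hq0 hq hh fun x => ⟨_, (hord x).symm⟩
  obtain ⟨g, hg, hgw⟩ := exists_ordAt_eq (w := fun c => ordAt h c / n)
    ((finite_setOf_ordAt_ne_zero hh).subset fun c hc h0 => hc (by simp [h0]))
  have hσg := sigmaq_ne_zero hq0 hg
  have hb : ∀ c, ordAt (a * g / sigmaq q g) c = 0 := fun c => by
    refine (mul_eq_zero.1 ?_).resolve_left hn
    rw [ordAt_div (mul_ne_zero ha hg) hσg, ordAt_mul ha hg, ordAt_sigmaq hq0 hg, hgw, hgw]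
    rcases eq_or_ne c 0 with rfl | hc
    · simpa using hord 0
    · rw [mul_sub, mul_add, Int.mul_ediv_cancel' (hdvd c hc),
        Int.mul_ediv_cancel' (hdvd _ (mul_ne_zero hq0 hc)), hord c]
      ring
  obtain ⟨lam, hlam, hb_eq⟩ := eq_C_of_ordAt_eq_zero (div_ne_zero (mul_ne_zero ha hg) hσg) hb
  refine ⟨g, hg, lam, hlam, ?_⟩
  rw [← hb_eq]
  field_simp

lemma exists_zpow_eq_of_sigmaq_eq_C_mul (hq0 : q ≠ 0) (hq : ‖q‖ ≠ 1) {u : RatFunc ℂ} (hu : u ≠ 0)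
    {ν : ℂ} (hσu : sigmaq q u = RatFunc.C ν * u) : ∃ s : ℤ, ν = q ^ s := by
  have hν : ν ≠ 0 := by
    rintro rfl
    rw [map_zero, zero_mul] at hσu
    exact sigmaq_ne_zero hq0 hu hσu
  have hinv : ∀ x, ordAt u (q * x) = ordAt u x := fun x => by
    rw [← ordAt_sigmaq hq0 hu, hσu, ordAt_mul ((_root_.map_ne_zero _).2 hν) hu, ordAt_C hν,
      zero_add]
  obtain ⟨γ, hγ, hu_eq⟩ := eq_C_mul_X_zpow_of_ordAt_eq_zero hu fun c hc =>
    zero_dvd_iff.1 (dvd_ordAt_of_dvd_ordAt_mul_sub hq0 hq hu (fun x => by simp [hinv x]) hc)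
  set s := ordAt u 0
  refine ⟨s, RatFunc.C_injective (mul_right_cancel₀ hu ?_)⟩
  rw [← hσu, ← sigmaqAlgHom_apply hq0]
  nth_rewrite 1 [hu_eq]
  rw [map_mul, map_zpow₀, sigmaqAlgHom_X, sigmaqAlgHom_C, hu_eq, mul_zpow, map_zpow₀]
  ring

/-- Lemme 4.8. If `a^n = μ·σ_q(h)/h` for some nonzero integer
`n`, `h ∈ ℂ(z)*` and `μ ∈ ℂ*`, then there exist `g ∈ ℂ(z)*` and `λ ∈ ℂ*` with
`a = λ·σ_q(g)/g` and `λ^n ∈ μ·q^ℤ`. -/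
theorem statement15 (q : ℂ) (hq0 : q ≠ 0) (hq : ‖q‖ ≠ 1)
    (a : RatFunc ℂ) (ha : a ≠ 0)
    (n : ℤ) (hn : n ≠ 0) (μ : ℂ) (hμ : μ ≠ 0)
    (h : RatFunc ℂ) (hh : h ≠ 0)
    (hyp : a ^ n = RatFunc.C μ * sigmaq q h / h) :
    ∃ g : RatFunc ℂ, g ≠ 0 ∧ ∃ lam : ℂ, lam ≠ 0 ∧
      a = RatFunc.C lam * sigmaq q g / g ∧ ∃ s : ℤ, lam ^ n = μ * q ^ s := by
  obtain ⟨g, hg, lam, hlam, ha_eq⟩ := exists_eq_C_mul_sigmaq_div hq0 hq ha hn hμ hh hyp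
  refine ⟨g, hg, lam, hlam, ha_eq, ?_⟩
  have hCμ : (RatFunc.C μ : RatFunc ℂ) ≠ 0 := (_root_.map_ne_zero _).2 hμ
  have hσg := sigmaq_ne_zero hq0 hg
  have hσu : sigmaq q (h / g ^ n) = RatFunc.C (lam ^ n / μ) * (h / g ^ n) := by
    have hσh : sigmaq q h = a ^ n * h / RatFunc.C μ := by
      rw [hyp]
      field_simp
    simp only [← sigmaqAlgHom_apply hq0] at hσh hσg ha_eq ⊢
    rw [map_div₀, map_zpow₀, hσh, ha_eq, map_div₀, map_zpow₀, div_zpow, mul_zpow]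
    field_simp
  obtain ⟨s, hs⟩ :=
    exists_zpow_eq_of_sigmaq_eq_C_mul hq0 hq (div_ne_zero hh (zpow_ne_zero n hg)) hσu
  exact ⟨s, by rw [← hs]; field_simp⟩
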